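/- Let d > 2 and, for 2 ≤ s ≤ d-1, let M_d^s denote the maximal genus of a finite O-sequence of multiplicity d and length s. Then M_d^s < C(s, 2) - 1 if and only if (2d + 1 - √(8d - 15))/2 < s ≤ d-1. Moreover, for every s with (2d + 1 - √(8d - 15))/2 < s ≤ d-1, every integer in the interval [M_d^s + 1, C(s, 2) - 1] is a gap in R_d. -/

import Mathlib

/-- The Macaulay bound `a^⟨t⟩`: if `a = C(k_t,t) + C(k_{t-1},t-1) + ⋯ + C(k_j,j)` is the
binomial expansion of `a` in base `t`, then `a^⟨t⟩ = C(k_t+1,t+1) + ⋯ + C(k_j+1,j+1)`.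
Computed greedily; `mac t a = a^⟨t⟩` for `t ≥ 1`. -/
def mac : ℕ → ℕ → ℕ
  | 0, _ => 0
  | t+1, a =>
    if a = 0 then 0
    else
      Nat.choose (Nat.findGreatest (fun n => Nat.choose n (t+1) ≤ a) (a + t + 1) + 1) (t+2) +
        mac t (a - Nat.choose (Nat.findGreatest (fun n => Nat.choose n (t+1) ≤ a) (a + t + 1)) (t+1))

/-- `h : ℕ → ℕ` is a finite O-sequence of length `s`: `h 0 = 1`, the entries `h 0, …, h (s-1)`
are positive, entries from index `s` on are zero, and `h (t+1) ≤ (h t)^⟨t⟩` for all `t ≥ 1`. -/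
def IsOSeq (h : ℕ → ℕ) (s : ℕ) : Prop :=
  h 0 = 1 ∧ (∀ i, 0 < h i ↔ i < s) ∧ ∀ t, 1 ≤ t → h (t + 1) ≤ mac t (h t)

/-- The multiplicity `e(h) = h_0 + ⋯ + h_{s-1}` of a finite O-sequence of length `s`. -/
def mult (h : ℕ → ℕ) (s : ℕ) : ℕ := ∑ i ∈ Finset.range s, h i

/-- The genus `g(h) = Σ_{j=2}^{s-1} (j-1)·h_j` of a finite O-sequence of length `s`. -/
def genus (h : ℕ → ℕ) (s : ℕ) : ℕ := ∑ j ∈ Finset.range s, (j - 1) * h j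

/-- The sequence obtained from `h` by increasing the `i`-th entry by `1`, i.e. `h + e_i`. -/
def addE (h : ℕ → ℕ) (i : ℕ) : ℕ → ℕ := fun j => if j = i then h j + 1 else h j

/-- The sequence obtained from `h` by decreasing the `i`-th entry by `1`, i.e. `h - e_i`. -/
def subE (h : ℕ → ℕ) (i : ℕ) : ℕ → ℕ := fun j => if j = i then h j - 1 else h j

/-- The total order on finite O-sequences of the same length: `oLT h k` iff `h_ℓ < k_ℓ`
where `ℓ = max{ j : h_j ≠ k_j }`. -/
def oLT (h k : ℕ → ℕ) : Prop := ∃ ℓ, h ℓ < k ℓ ∧ ∀ j, ℓ < j → h j = k j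

/-- The set of genera of finite O-sequences of multiplicity `d` and length `s`. -/
def genusSet (d s : ℕ) : Set ℕ := {g | ∃ h, IsOSeq h s ∧ mult h s = d ∧ genus h s = g}

/-- `G_d`: the set of genera of finite O-sequences of multiplicity `d` (of any length). -/
def GSet (d : ℕ) : Set ℕ := {g | ∃ h s, IsOSeq h s ∧ mult h s = d ∧ genus h s = g}

/-- `g` is a gap in `R_d = [0, C(d-1,2)]`: it lies in the range but is not the genus of any
finite O-sequence of multiplicity `d`. -/
def IsGap (d g : ℕ) : Prop :=
  g ≤ Nat.choose (d - 1) 2 ∧ ∀ h s, IsOSeq h s → mult h s = d → genus h s ≠ g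

/-- The O-sequence `(1, d-s+1, 1^{s-2})`, minimal in `𝒢_d^s`. -/
def minSeq (d s : ℕ) : ℕ → ℕ :=
  fun j => if j = 0 then 1 else if j = 1 then d - s + 1 else if j < s then 1 else 0

/-- The O-sequence `(1, 2^{d-s}, 1^{2s-d-1})`, maximal in `𝒢_d^s`. -/
def maxSeq (d s : ℕ) : ℕ → ℕ :=
  fun j => if j = 0 then 1 else if j ≤ d - s then 2 else if j < s then 1 else 0

/-- The O-sequence `(1, d-1)`. -/
def twoSeq (d : ℕ) : ℕ → ℕ := fun j => if j = 0 then 1 else if j = 1 then d - 1 else 0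

/-- The operation `h ↦ h - e_{s-1} + e_1` on a sequence of length `s`. -/
def downUp (h : ℕ → ℕ) (s : ℕ) : ℕ → ℕ :=
  fun j => if j = s - 1 then h j - 1 else if j = 1 then h j + 1 else h j

/-- The largest index `1 ≤ j ≤ s-1` with `h j > 1` (and `0` if there is none). -/
def topIdx (h : ℕ → ℕ) (s : ℕ) : ℕ := Nat.findGreatest (fun j => 1 < h j) (s - 1)

/-- The operation `h ↦ h - e_i + e_1` where `i = topIdx h s`. -/
def shiftDown (h : ℕ → ℕ) (s : ℕ) : ℕ → ℕ :=
  fun j => if j = topIdx h s then h j - 1 else if j = 1 then h j + 1 else h j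

/-- Auxiliary list `[m_n, m_{n-1}, …, m_1]` for the recursively defined sequence `(m_d)`. -/
def mListAux : ℕ → List ℕ
  | 0 => []
  | n+1 =>
    let prev := mListAux n
    let newVal :=
      if n = 0 then 0
      else
        (List.range' 2 (n - 1)).foldl
          (fun M k =>
            if Nat.choose k 2 - 1 ≤ M then max M (prev.getD (k - 1) 0 + Nat.choose k 2) else M)
          (prev.getD 0 0)
    newVal :: prev

/-- The sequence `(m_d)_{d ≥ 1}`: `m_1 = 0` and, for `d ≥ 2`, `m_d` is obtained from
`M := m_{d-1}` by running over `k = 2, …, d-1` and replacing `M` by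
`max M (m_{d-k} + C(k,2))` whenever `C(k,2) - 1 ≤ M`. -/
def mSeq (d : ℕ) : ℕ := (mListAux d).getD 0 0


/-!
Write `u = d - s`. An O-sequence of length `t` has the shape `(1, h₁, …, hₘ, 1, …, 1)` with
`hⱼ ≥ 2` exactly for `1 ≤ j ≤ m = topIdx h t`, because an entry `≤ 1` forces all later ones to
be `≤ 1`. Its genus is `C(t-1,2) + ∑ (j-1)(hⱼ-1)`, hence at most
`C(t-1,2) + C(m,2) + (m-1)(d-t-m)`. The condition on `√(8d-15)` is equivalent to
`C(u,2) + 2 < s`, and under it this bound is at most `C(s-1,2) + C(u,2)` for every `t ≤ s`;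
the value is attained by `(1, 2^u, 1^{s-u-1})`, so `M = C(s-1,2) + C(u,2) < C(s,2) - 1`.
Longer sequences have genus at least `C(s,2)`, which leaves `[M+1, C(s,2)-1]` as gaps.
If the condition fails, `(1, c, 2^{m-1}, 1^{s-m-1})` with `m = min(u, s-1)` already has genus
`≥ C(s,2) - 1`.
-/

lemma mac_zero_right (t : ℕ) : mac t 0 = 0 := by
  cases t <;> simp [mac]

lemma mac_succ_of_choose_le_of_lt {t a k : ℕ} (ha : a ≠ 0) (hk : k ≤ a + t + 1)
    (hle : k.choose (t + 1) ≤ a) (hlt : a < (k + 1).choose (t + 1)) :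
    mac (t + 1) a = (k + 1).choose (t + 2) + mac t (a - k.choose (t + 1)) := by
  have hgreatest : Nat.findGreatest (fun n => n.choose (t + 1) ≤ a) (a + t + 1) = k :=
    Nat.findGreatest_eq_iff.mpr ⟨hk, fun _ => hle, fun n hkn _ hn =>
      (hlt.trans_le (Nat.choose_le_choose _ hkn)).not_ge hn⟩
  rw [mac, if_neg ha, hgreatest]

lemma mac_one_right {t : ℕ} (ht : 1 ≤ t) : mac t 1 = 1 := by
  obtain ⟨t, rfl⟩ := Nat.exists_eq_add_of_le' ht
  rw [mac_succ_of_choose_le_of_lt (k := t + 1) one_ne_zero (by omega) (by simp)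
    (by simp [Nat.choose_succ_self_right])]
  simp [mac_zero_right]

lemma mac_one_left {a : ℕ} (ha : a ≠ 0) : mac 1 a = (a + 1).choose 2 := by
  rw [mac_succ_of_choose_le_of_lt (k := a) ha (by omega) (by simp) (by simp)]
  simp [mac]

lemma two_le_mac_two_right {t : ℕ} (ht : 1 ≤ t) : 2 ≤ mac t 2 := by
  obtain ⟨t, rfl⟩ := Nat.exists_eq_add_of_le' ht
  rcases t.eq_zero_or_pos with rfl | ht
  · simp [mac_one_left]
  · rw [mac_succ_of_choose_le_of_lt (k := t + 1) two_ne_zero (by omega) (by simp)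
      (by simp [Nat.choose_succ_self_right]; omega)]
    simp [mac_one_right ht]

lemma sum_range_sub_one (n : ℕ) : ∑ j ∈ Finset.range n, (j - 1) = (n - 1).choose 2 := by
  cases n with
  | zero => simp
  | succ n => simp [Finset.sum_range_succ', Finset.sum_range_id, Nat.choose_two_right]

lemma sum_Icc_sub_one (m : ℕ) : ∑ j ∈ Finset.Icc 1 m, (j - 1) = m.choose 2 := by
  rw [← Finset.Ico_add_one_right_eq_Icc, Finset.sum_Ico_eq_sum_range]
  simp [Finset.sum_range_id, Nat.choose_two_right]

lemma sub_one_le_choose_two (n : ℕ) : n - 1 ≤ n.choose 2 := by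
  cases n with
  | zero => simp
  | succ n => simp [Nat.choose_succ_succ']

lemma choose_two_eq_sub_one_add {n : ℕ} (hn : 1 ≤ n) :
    n.choose 2 = (n - 1) + (n - 1).choose 2 := by
  obtain ⟨n, rfl⟩ := Nat.exists_eq_add_of_le' hn
  simp [Nat.choose_succ_succ']

/-- The weighted sum is largest when every surplus unit sits at position `m`. -/
lemma sum_Icc_sub_one_mul_le {m : ℕ} {x : ℕ → ℕ}
    (hx : ∀ j ∈ Finset.Icc 1 m, 1 ≤ x j) :
    ∑ j ∈ Finset.Icc 1 m, (j - 1) * x j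
      ≤ m.choose 2 + (m - 1) * (∑ j ∈ Finset.Icc 1 m, x j - m) := by
  have hsplit : ∑ j ∈ Finset.Icc 1 m, x j - m = ∑ j ∈ Finset.Icc 1 m, (x j - 1) := by
    rw [Finset.sum_tsub_distrib _ hx]; simp
  calc ∑ j ∈ Finset.Icc 1 m, (j - 1) * x j
      ≤ ∑ j ∈ Finset.Icc 1 m, ((j - 1) + (m - 1) * (x j - 1)) := by
        refine Finset.sum_le_sum fun j hj => ?_
        have hjm : j - 1 ≤ m - 1 := by simp at hj; omega
        have hxj := hx j hj
        calc (j - 1) * x j = (j - 1) + (j - 1) * (x j - 1) := by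
              rw [add_comm, ← Nat.mul_add_one, Nat.sub_add_cancel hxj]
          _ ≤ (j - 1) + (m - 1) * (x j - 1) := by gcongr
    _ = m.choose 2 + (m - 1) * (∑ j ∈ Finset.Icc 1 m, x j - m) := by
        rw [Finset.sum_add_distrib, sum_Icc_sub_one, hsplit, Finset.mul_sum]

lemma topIdx_le_sub_one {h : ℕ → ℕ} {s : ℕ} : topIdx h s ≤ s - 1 := Nat.findGreatest_le _

namespace IsOSeq

variable {h : ℕ → ℕ} {s : ℕ}

lemma pos (hO : IsOSeq h s) {i : ℕ} (hi : i < s) : 0 < h i := (hO.2.1 i).2 hi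

lemma le_one_of_le (hO : IsOSeq h s) {j k : ℕ} (hj : 1 ≤ j) (hjk : j ≤ k) (hj1 : h j ≤ 1) :
    h k ≤ 1 := by
  induction k, hjk using Nat.le_induction with
  | base => exact hj1
  | succ k hjk ih =>
    have hk : 1 ≤ k := hj.trans hjk
    have hmac := hO.2.2 k hk
    interval_cases hhk : h k
    · rw [mac_zero_right] at hmac; omega
    · rwa [mac_one_right hk] at hmac

lemma genus_eq (hO : IsOSeq h s) :
    genus h s = (s - 1).choose 2 + ∑ j ∈ Finset.range s, (j - 1) * (h j - 1) := by
  have hterm : ∀ j ∈ Finset.range s, (j - 1) * h j = (j - 1) + (j - 1) * (h j - 1) := by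
    intro j hj
    rw [add_comm, ← Nat.mul_add_one, Nat.sub_add_cancel (hO.pos (Finset.mem_range.mp hj))]
  rw [genus, Finset.sum_congr rfl hterm, Finset.sum_add_distrib, sum_range_sub_one]

lemma choose_two_le_genus (hO : IsOSeq h s) : (s - 1).choose 2 ≤ genus h s :=
  hO.genus_eq ▸ Nat.le_add_right _ _

lemma mult_eq (hO : IsOSeq h s) : mult h s = s + ∑ j ∈ Finset.range s, (h j - 1) := by
  have hterm : ∀ j ∈ Finset.range s, h j = 1 + (h j - 1) := fun j hj =>
    (Nat.add_sub_cancel' (hO.pos (Finset.mem_range.mp hj))).symm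
  rw [mult, Finset.sum_congr rfl hterm, Finset.sum_add_distrib]
  simp

lemma eq_one_of_topIdx_lt (hO : IsOSeq h s) {j : ℕ} (hj : topIdx h s < j) (hjs : j < s) :
    h j = 1 := by
  have := Nat.findGreatest_is_greatest hj (by omega : j ≤ s - 1)
  have := hO.pos hjs
  omega

lemma two_le_of_le_topIdx (hO : IsOSeq h s) {j : ℕ} (hj1 : 1 ≤ j) (hj : j ≤ topIdx h s) :
    2 ≤ h j := by
  have htop : 1 < h (topIdx h s) := Nat.findGreatest_of_ne_zero (P := fun j => 1 < h j)
    rfl (by omega)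
  by_contra hlt
  have := hO.le_one_of_le hj1 hj (by omega)
  omega

lemma sum_range_mul_eq_sum_Icc (hO : IsOSeq h s) (f : ℕ → ℕ) :
    ∑ j ∈ Finset.range s, f j * (h j - 1)
      = ∑ j ∈ Finset.Icc 1 (topIdx h s), f j * (h j - 1) := by
  have hsub : Finset.Icc 1 (topIdx h s) ⊆ Finset.range s := fun j hj => by
    have := topIdx_le_sub_one (h := h) (s := s)
    simp only [Finset.mem_Icc] at hj
    simp only [Finset.mem_range]
    omega
  refine (Finset.sum_subset hsub fun j hjs hj => ?_).symm
  simp only [Finset.mem_Icc, Finset.mem_range, not_and_or, not_le] at hjs hj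
  rcases hj with hj | hj
  · simp [show j = 0 by omega, hO.1]
  · simp [hO.eq_one_of_topIdx_lt hj hjs]

lemma sum_Icc_topIdx_eq (hO : IsOSeq h s) :
    ∑ j ∈ Finset.Icc 1 (topIdx h s), (h j - 1) = mult h s - s := by
  simpa using (hO.sum_range_mul_eq_sum_Icc fun _ => 1).symm.trans (by rw [hO.mult_eq]; simp)

lemma topIdx_le_mult_sub (hO : IsOSeq h s) : topIdx h s ≤ mult h s - s := by
  rw [← hO.sum_Icc_topIdx_eq]
  have := Finset.card_nsmul_le_sum (Finset.Icc 1 (topIdx h s)) (fun j => h j - 1) 1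
    fun j hj => by
      simp only [Finset.mem_Icc] at hj
      have := hO.two_le_of_le_topIdx hj.1 hj.2
      omega
  simpa using this

lemma genus_le_topIdx (hO : IsOSeq h s) :
    genus h s ≤ (s - 1).choose 2 + (topIdx h s).choose 2
      + (topIdx h s - 1) * (mult h s - s - topIdx h s) := by
  rw [hO.genus_eq, hO.sum_range_mul_eq_sum_Icc, ← hO.sum_Icc_topIdx_eq, add_assoc]
  gcongr
  refine sum_Icc_sub_one_mul_le fun j hj => ?_
  simp only [Finset.mem_Icc] at hj
  have := hO.two_le_of_le_topIdx hj.1 hj.2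
  omega

end IsOSeq

lemma choose_add_choose_add_mul_le {d s t m : ℕ} (hts : t ≤ s) (hsd : s < d)
    (hcond : (d - s).choose 2 + 2 < s) (hmt : m ≤ t - 1) (hmd : m ≤ d - t) :
    (t - 1).choose 2 + m.choose 2 + (m - 1) * (d - t - m)
      ≤ (s - 1).choose 2 + (d - s).choose 2 := by
  rcases m.eq_zero_or_pos with rfl | hm
  · simpa using
      (Nat.choose_le_choose 2 (Nat.sub_le_sub_right hts 1)).trans (Nat.le_add_right _ _)
  -- write `m = k + 1`, `t = m + 1 + a`, `s = t + r`, `d - s = v + 1` and `d - t - m = b`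
  obtain ⟨k, rfl⟩ : ∃ k, m = k + 1 := ⟨m - 1, by omega⟩
  obtain ⟨a, rfl⟩ : ∃ a, t = k + 2 + a := ⟨t - (k + 2), by omega⟩
  obtain ⟨r, rfl⟩ := Nat.exists_eq_add_of_le hts
  obtain ⟨v, rfl⟩ : ∃ v, d = k + 2 + a + r + (v + 1) :=
    ⟨d - (k + 2 + a + r + 1), by omega⟩
  obtain ⟨b, hb⟩ : ∃ b, r + v = k + b := ⟨r + v - k, by omega⟩
  rw [show k + 2 + a + r + (v + 1) - (k + 2 + a + r) = v + 1 by omega] at hcond ⊢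
  rw [show k + 2 + a - 1 = k + 1 + a by omega, show k + 1 - 1 = k by omega,
    show k + 2 + a + r + (v + 1) - (k + 2 + a) - (k + 1) = b by omega,
    show k + 2 + a + r - 1 = k + 1 + a + r by omega]
  have hcond' : ((v + 1).choose 2 : ℚ) + 3 ≤ k + 2 + a + r := by exact_mod_cast hcond
  rw [← Nat.cast_le (α := ℚ)]
  push_cast [Nat.cast_choose_two] at hcond' ⊢
  have hb' : (r : ℚ) + v = k + b := by exact_mod_cast hb
  rcases le_or_gt v (k + a) with hva | hva
  · have hva' : (v : ℚ) ≤ k + a := by exact_mod_cast hva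
    nlinarith [mul_nonneg (b.cast_nonneg : (0 : ℚ) ≤ b) (r.cast_nonneg : (0 : ℚ) ≤ r),
      mul_nonneg (r.cast_nonneg : (0 : ℚ) ≤ r) (sub_nonneg.mpr hva')]
  · have hva' : (k : ℚ) + a + 1 ≤ v := by exact_mod_cast hva
    nlinarith [sq_nonneg ((v : ℚ) - k - a - r)]

lemma IsOSeq.genus_le_of_choose_two_add_two_lt {h : ℕ → ℕ} {d s t : ℕ} (hO : IsOSeq h t)
    (hmult : mult h t = d) (hts : t ≤ s) (hsd : s < d) (hcond : (d - s).choose 2 + 2 < s) :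
    genus h t ≤ (s - 1).choose 2 + (d - s).choose 2 := by
  refine hO.genus_le_topIdx.trans ?_
  rw [hmult]
  exact choose_add_choose_add_mul_le hts hsd hcond topIdx_le_sub_one
    (hmult ▸ hO.topIdx_le_mult_sub)

/-- The O-sequence `(1, c, 2^{m-1}, 1^{s-m-1})`. -/
def plateauSeq (s m c : ℕ) : ℕ → ℕ :=
  fun j => if j = 0 then 1 else if j = 1 then c else if j ≤ m then 2 else if j < s then 1 else 0

section plateauSeq

variable {s m c : ℕ}

lemma isOSeq_plateauSeq (hm : 1 ≤ m) (hms : m < s) (hc : 2 ≤ c) :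
    IsOSeq (plateauSeq s m c) s := by
  refine ⟨rfl, fun i => ?_, fun t ht => ?_⟩
  · unfold plateauSeq; split_ifs <;> omega
  · have hnext : plateauSeq s m c (t + 1) ≤ 2 := by unfold plateauSeq; split_ifs <;> omega
    rcases Nat.lt_or_ge m t with hmt | htm
    · rcases Nat.lt_or_ge t s with hts | hst
      · have : plateauSeq s m c t = 1 := by unfold plateauSeq; split_ifs <;> omega
        rw [this, mac_one_right ht]
        unfold plateauSeq; split_ifs <;> omega
      · have : plateauSeq s m c (t + 1) = 0 := by unfold plateauSeq; split_ifs <;> omega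
        omega
    · refine hnext.trans ?_
      rcases Nat.eq_or_lt_of_le ht with rfl | ht'
      · have : plateauSeq s m c 1 = c := rfl
        rw [this, mac_one_left (by omega)]
        simpa using hc.trans (sub_one_le_choose_two (c + 1))
      · have : plateauSeq s m c t = 2 := by unfold plateauSeq; split_ifs <;> omega
        exact this ▸ two_le_mac_two_right ht

lemma mult_plateauSeq (hm : 1 ≤ m) (hms : m < s) (hc : 1 ≤ c) :
    mult (plateauSeq s m c) s = s + (c - 1) + (m - 1) := by
  have hterm : ∀ j ∈ Finset.range s, plateauSeq s m c j
      = 1 + (if j = 1 then c - 1 else 0) + (if 2 ≤ j ∧ j ≤ m then 1 else 0) := by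
    intro j hj
    simp only [Finset.mem_range] at hj
    unfold plateauSeq; split_ifs <;> omega
  have hfilter : (Finset.range s).filter (fun j => 2 ≤ j ∧ j ≤ m) = Finset.Icc 2 m := by
    ext j; simp only [Finset.mem_filter, Finset.mem_range, Finset.mem_Icc]; omega
  rw [mult, Finset.sum_congr rfl hterm, Finset.sum_add_distrib, Finset.sum_add_distrib,
    Finset.sum_ite_eq', ← Finset.sum_filter, hfilter]
  simp [show 1 < s by omega]

lemma genus_plateauSeq (hm : 1 ≤ m) (hms : m < s) :
    genus (plateauSeq s m c) s = (s - 1).choose 2 + m.choose 2 := by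
  have hterm : ∀ j ∈ Finset.range s, (j - 1) * plateauSeq s m c j
      = (j - 1) + (if 1 ≤ j ∧ j ≤ m then j - 1 else 0) := by
    intro j hj
    simp only [Finset.mem_range] at hj
    unfold plateauSeq; split_ifs <;> first | omega | (subst_vars; simp)
  have hfilter : (Finset.range s).filter (fun j => 1 ≤ j ∧ j ≤ m) = Finset.Icc 1 m := by
    ext j; simp only [Finset.mem_filter, Finset.mem_range, Finset.mem_Icc]; omega
  rw [genus, Finset.sum_congr rfl hterm, Finset.sum_add_distrib, sum_range_sub_one,
    ← Finset.sum_filter, hfilter, sum_Icc_sub_one]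

end plateauSeq

lemma choose_add_choose_mem_genusSet {d s m : ℕ} (hm : 1 ≤ m) (hms : m < s)
    (hmd : m ≤ d - s) :
    (s - 1).choose 2 + m.choose 2 ∈ genusSet d s :=
  ⟨plateauSeq s m (d - s - m + 2), isOSeq_plateauSeq hm hms (by omega),
    by rw [mult_plateauSeq hm hms (by omega)]; omega, genus_plateauSeq hm hms⟩

lemma half_sub_sqrt_lt_iff {d s : ℕ} (hsd : s < d) :
    (2 * (d : ℝ) + 1 - Real.sqrt (8 * (d : ℝ) - 15)) / 2 < (s : ℝ) ↔
      (d - s).choose 2 + 2 < s := by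
  obtain ⟨u, rfl⟩ := Nat.exists_eq_add_of_le hsd.le
  have hshift :
      (2 * ((s + u : ℕ) : ℝ) + 1 - Real.sqrt (8 * ((s + u : ℕ) : ℝ) - 15)) / 2 < s ↔
      2 * (u : ℝ) + 1 < Real.sqrt (8 * ((s + u : ℕ) : ℝ) - 15) := by
    rw [div_lt_iff₀ two_pos]
    push_cast
    constructor <;> intro h <;> linarith
  rw [hshift, Real.lt_sqrt (by positivity), Nat.add_sub_cancel_left, ← Nat.cast_lt (α := ℝ)]
  push_cast [Nat.cast_choose_two]
  constructor <;> intro h <;> linarith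

theorem stmt11_general (d s M : ℕ) (hs : 2 ≤ s) (hsd : s ≤ d - 1)
    (hM : IsGreatest (genusSet d s) M) :
    (M < Nat.choose s 2 - 1 ↔
      ((2 * (d : ℝ) + 1 - Real.sqrt (8 * (d : ℝ) - 15)) / 2 < (s : ℝ) ∧ s ≤ d - 1)) ∧
    ((2 * (d : ℝ) + 1 - Real.sqrt (8 * (d : ℝ) - 15)) / 2 < (s : ℝ) →
      ∀ g : ℕ, M + 1 ≤ g → g ≤ Nat.choose s 2 - 1 → IsGap d g) := by
  have hsd' : s < d := by omega
  have hpascal := choose_two_eq_sub_one_add (show 1 ≤ s by omega)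
  rw [half_sub_sqrt_lt_iff hsd']
  have hM_eq : (d - s).choose 2 + 2 < s → M = (s - 1).choose 2 + (d - s).choose 2 := by
    intro hcond
    have hds : d - s < s := by have := sub_one_le_choose_two (d - s); omega
    obtain ⟨h, hO, hmult, rfl⟩ := hM.1
    exact le_antisymm (hO.genus_le_of_choose_two_add_two_lt hmult le_rfl hsd' hcond)
      (hM.2 (choose_add_choose_mem_genusSet (by omega) hds le_rfl))
  have hM_ge : ¬(d - s).choose 2 + 2 < s → s.choose 2 - 1 ≤ M := by
    intro hcond
    have hmem := hM.2 (choose_add_choose_mem_genusSet (m := min (d - s) (s - 1))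
      (by omega) (by omega) (min_le_left _ _))
    have hmin : s - 2 ≤ (min (d - s) (s - 1)).choose 2 := by
      rcases min_cases (d - s) (s - 1) with ⟨hmin, _⟩ | ⟨hmin, _⟩ <;> rw [hmin]
      · omega
      · simpa using sub_one_le_choose_two (s - 1)
    omega
  refine ⟨⟨fun hlt => ⟨?_, hsd⟩, fun ⟨hcond, _⟩ => ?_⟩,
    fun hcond g hMg hgs => ⟨?_, fun h t hO hmult hgenus => ?_⟩⟩
  · by_contra hcond
    have := hM_ge hcond
    omega
  · rw [hM_eq hcond]
    omega
  · exact hgs.trans ((Nat.sub_le _ _).trans (Nat.choose_le_choose 2 hsd))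
  · rcases le_or_gt t s with hts | hst
    · have := hO.genus_le_of_choose_two_add_two_lt hmult hts hsd' hcond
      rw [hM_eq hcond] at hMg
      omega
    · have := hO.choose_two_le_genus
      have := Nat.choose_le_choose 2 (show s ≤ t - 1 by omega)
      omega

/-- Let `d > 2`, `2 ≤ s ≤ d-1`, and let `M` be the maximal genus of a
finite O-sequence of multiplicity `d` and length `s`. Then `M < C(s,2) - 1` if and only if
`(2d + 1 - √(8d-15))/2 < s ≤ d-1`; moreover, in that case every integer in
`[M + 1, C(s,2) - 1]` is a gap in `R_d`. -/
theorem stmt11 (d s M : ℕ) (hd : 2 < d) (hs : 2 ≤ s) (hsd : s ≤ d - 1)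
    (hM : IsGreatest (genusSet d s) M) :
    (M < Nat.choose s 2 - 1 ↔
      ((2 * (d : ℝ) + 1 - Real.sqrt (8 * (d : ℝ) - 15)) / 2 < (s : ℝ) ∧ s ≤ d - 1)) ∧
    ((2 * (d : ℝ) + 1 - Real.sqrt (8 * (d : ℝ) - 15)) / 2 < (s : ℝ) →
      ∀ g : ℕ, M + 1 ≤ g → g ≤ Nat.choose s 2 - 1 → IsGap d g) :=
  stmt11_general d s M hs hsd hM
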